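/- arXiv:1505.01956 — 5 statements merged into one kernel-verified Lean document; each statement's English description precedes it below -/
import Mathlib

section
/- Determination of the integration constant by the regularized boundary condition at the singular point: let f : [0,1] → ℂ be continuous, let c₁, c₂ ∈ ℂ, and define u(x) = c₁·x + c₂/x + ∫₁ˣ (x/2 − ξ²/(2x))·f(ξ) dξ for x ∈ (0,1]. Then u(x) converges to a finite limit as x → 0⁺ if and only if c₂ = −(1/2)·∫₀¹ ξ²·f(ξ) dξ, and in that case the limit is 0. -/
open Set Filter Topology intervalIntegral

/-!
Since `∫₁ˣ ξ² f = ∫₀ˣ ξ² f − ∫₀¹ ξ² f`, on `(0, 1]` we can write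
`u(x) = (c₂ + ½ ∫₀¹ ξ² f) / x + r(x)` with
`r(x) = c₁ x + (x/2) ∫₁ˣ f − (1/(2x)) ∫₀ˣ ξ² f`.
The regular part `r` tends to `0`: the middle term because `∫₁ˣ f` stays bounded, the last one
because `(1/x) ∫₀ˣ ξ² f` tends to the value `0` of `ξ² f` at `ξ = 0` (fundamental theorem of
calculus). Hence `u` has a limit at `0⁺` exactly when the coefficient of the pole `1/x` vanishes,
and then the limit is `0`.
-/

theorem tendsto_inv_smul_integral_nhdsGT {E : Type*} [NormedAddCommGroup E] [NormedSpace ℝ E]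
    [CompleteSpace E] {g : ℝ → E} {a b : ℝ} (hab : a < b) (hg : ContinuousOn g (Icc a b)) :
    Tendsto (fun x => (x - a)⁻¹ • ∫ t in a..x, g t) (𝓝[>] a) (𝓝 (g a)) := by
  have hmeas : StronglyMeasurableAtFilter g (𝓝[>] a) :=
    ⟨Ioo a b, Ioo_mem_nhdsGT hab,
      (hg.mono Ioo_subset_Icc_self).aestronglyMeasurable measurableSet_Ioo⟩
  have hcont : ContinuousWithinAt g (Ioi a) a :=
    (hg a (left_mem_Icc.2 hab.le)).mono_of_mem_nhdsWithin (Icc_mem_nhdsGT hab)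
  have hderiv : HasDerivWithinAt (fun x => ∫ t in a..x, g t) (g a) (Ici a) a :=
    integral_hasDerivWithinAt_right IntervalIntegrable.refl hmeas hcont
  simpa [slope_fun_def] using
    (hasDerivWithinAt_iff_tendsto_slope' self_notMem_Ioi).1 (hderiv.mono Ioi_subset_Ici_self)

theorem exists_tendsto_nhdsGT_zero_iff_of_tendsto_sub_div {u : ℝ → ℂ} {k : ℂ}
    (h : Tendsto (fun x : ℝ => u x - k / x) (𝓝[>] 0) (𝓝 0)) :
    (∃ L, Tendsto u (𝓝[>] 0) (𝓝 L)) ↔ k = 0 := by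
  refine ⟨fun ⟨L, hL⟩ => ?_, fun hk => ⟨0, by simpa [hk] using h⟩⟩
  by_contra hk
  have hpole : Tendsto (fun x : ℝ => k / x) (𝓝[>] 0) (𝓝 L) := by
    simpa using hL.sub h
  have hnorm : Tendsto (fun x : ℝ => ‖k / x‖) (𝓝[>] 0) atTop := by
    refine (tendsto_inv_nhdsGT_zero.const_mul_atTop (norm_pos_iff.2 hk)).congr' ?_
    filter_upwards [self_mem_nhdsWithin] with x (hx : 0 < x)
    rw [norm_div, Complex.norm_real, Real.norm_of_nonneg hx.le, div_eq_mul_inv]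
  exact not_tendsto_atTop_of_tendsto_nhds hpole.norm hnorm

theorem integral_kernel_mul_eq {f : ℝ → ℂ} (hf : ContinuousOn f (Icc 0 1)) {x : ℝ}
    (hx : x ∈ Icc (0:ℝ) 1) :
    ∫ ξ in (1:ℝ)..x, ((x:ℂ)/2 - (ξ:ℂ)^2/(2*(x:ℂ))) * f ξ
      = (x:ℂ)/2 * (∫ ξ in (1:ℝ)..x, f ξ)
        + ((∫ ξ in (0:ℝ)..1, (ξ:ℂ)^2 * f ξ) - ∫ ξ in (0:ℝ)..x, (ξ:ℂ)^2 * f ξ) / (2*(x:ℂ)) := by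
  have hg : ContinuousOn (fun ξ : ℝ => (ξ:ℂ)^2 * f ξ) (Icc 0 1) := by fun_prop
  have h1 : (1:ℝ) ∈ Icc (0:ℝ) 1 := right_mem_Icc.2 zero_le_one
  have h0 : (0:ℝ) ∈ Icc (0:ℝ) 1 := left_mem_Icc.2 zero_le_one
  have hf1x := (hf.mono (uIcc_subset_Icc h1 hx)).intervalIntegrable (μ := MeasureTheory.volume)
  have hg1x := (hg.mono (uIcc_subset_Icc h1 hx)).intervalIntegrable (μ := MeasureTheory.volume)
  have hg0x := (hg.mono (uIcc_subset_Icc h0 hx)).intervalIntegrable (μ := MeasureTheory.volume)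
  have hg01 := (hg.mono (uIcc_subset_Icc h0 h1)).intervalIntegrable (μ := MeasureTheory.volume)
  have hsplit : ∫ ξ in (1:ℝ)..x, ((x:ℂ)/2 - (ξ:ℂ)^2/(2*(x:ℂ))) * f ξ
      = ∫ ξ in (1:ℝ)..x, ((x:ℂ)/2 * f ξ - (2*(x:ℂ))⁻¹ * ((ξ:ℂ)^2 * f ξ)) :=
    integral_congr fun ξ _ => by ring
  rw [hsplit, integral_sub (hf1x.const_mul _) (hg1x.const_mul _), integral_const_mul,
    integral_const_mul, ← integral_interval_sub_left hg0x hg01]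
  ring

theorem tendsto_regularPart_nhdsGT_zero {f : ℝ → ℂ} (hf : ContinuousOn f (Icc 0 1)) (c : ℂ) :
    Tendsto (fun x : ℝ => c * x + (x:ℂ)/2 * (∫ ξ in (1:ℝ)..x, f ξ)
      - (∫ ξ in (0:ℝ)..x, (ξ:ℂ)^2 * f ξ) / (2*(x:ℂ))) (𝓝[>] 0) (𝓝 0) := by
  have hF : Tendsto (fun x : ℝ => ∫ ξ in (1:ℝ)..x, f ξ) (𝓝[>] 0)
      (𝓝 (∫ ξ in (1:ℝ)..0, f ξ)) := by
    have hprim := continuousOn_primitive_interval' (a := 1) (μ := MeasureTheory.volume)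
      (hf.mono (uIcc_of_ge zero_le_one).subset).intervalIntegrable left_mem_uIcc
    rw [uIcc_of_ge zero_le_one] at hprim
    exact (hprim 0 (left_mem_Icc.2 zero_le_one)).mono_of_mem_nhdsWithin (Icc_mem_nhdsGT one_pos)
  have hG := tendsto_inv_smul_integral_nhdsGT one_pos
    (show ContinuousOn (fun ξ : ℝ => (ξ:ℂ)^2 * f ξ) (Icc 0 1) by fun_prop)
  have hcoe : Tendsto (fun x : ℝ => (x:ℂ)) (𝓝[>] 0) (𝓝 0) :=
    (Complex.continuous_ofReal.tendsto' 0 0 Complex.ofReal_zero).mono_left nhdsWithin_le_nhds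
  have hlim := ((hcoe.const_mul c).add ((hcoe.div_const 2).mul hF)).sub (hG.div_const 2)
  simp only [mul_zero, zero_div, zero_mul, add_zero, Complex.ofReal_zero, zero_pow two_ne_zero,
    sub_zero] at hlim
  refine hlim.congr' (Eventually.of_forall fun x => ?_)
  simp only [Complex.real_smul, Complex.ofReal_inv]
  ring

/-- Determination of the integration constant by the regularized boundary
condition at the singular point: `u(x) = c₁·x + c₂/x + ∫₁ˣ (x/2 − ξ²/(2x))·f(ξ) dξ`
has a finite limit as `x → 0⁺` iff `c₂ = −(1/2)·∫₀¹ ξ²·f(ξ) dξ`, in which case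
the limit is `0`. -/
theorem integration_constant_from_regularized_bc
    (f : ℝ → ℂ) (hf : ContinuousOn f (Set.Icc (0:ℝ) 1))
    (c₁ c₂ : ℂ)
    (u : ℝ → ℂ)
    (hu : ∀ x ∈ Set.Ioc (0:ℝ) 1,
      u x = c₁ * (x:ℂ) + c₂ / (x:ℂ)
        + ∫ ξ in (1:ℝ)..x, ((x:ℂ)/2 - (ξ:ℂ)^2/(2*(x:ℂ))) * f ξ) :
    ((∃ L : ℂ, Tendsto u (𝓝[>] (0:ℝ)) (𝓝 L)) ↔
      c₂ = -(1/2) * ∫ ξ in (0:ℝ)..1, (ξ:ℂ)^2 * f ξ) ∧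
    (c₂ = -(1/2) * (∫ ξ in (0:ℝ)..1, (ξ:ℂ)^2 * f ξ) →
      Tendsto u (𝓝[>] (0:ℝ)) (𝓝 (0:ℂ))) := by
  set A := ∫ ξ in (0:ℝ)..1, (ξ:ℂ)^2 * f ξ
  have hsing : Tendsto (fun x : ℝ => u x - (c₂ + A / 2) / x) (𝓝[>] 0) (𝓝 0) := by
    refine (tendsto_regularPart_nhdsGT_zero hf c₁).congr' ?_
    filter_upwards [Ioc_mem_nhdsGT one_pos] with x hx
    rw [hu x hx, integral_kernel_mul_eq hf (Ioc_subset_Icc_self hx)]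
    ring
  have hcoeff : c₂ + A / 2 = 0 ↔ c₂ = -(1/2) * A :=
    ⟨fun h => by linear_combination h, fun h => by linear_combination h⟩
  refine ⟨(exists_tendsto_nhdsGT_zero_iff_of_tendsto_sub_div hsing).trans hcoeff, fun hc => ?_⟩
  simpa [hcoeff.2 hc] using hsing
end

section
/- The Green's function solves the singular two-point boundary problem: let f : [0,1] → ℂ be continuous and define g(x,ξ) = x·ξ²/2 − ξ²/(2x) for ξ ≤ x and g(x,ξ) = x·ξ²/2 − x/2 for ξ ≥ x (with x ∈ (0,1], ξ ∈ [0,1]). Then the function u(x) := ∫₀¹ g(x,ξ)·f(ξ) dξ is twice differentiable on (0,1] and satisfies u''(x) + (1/x)·u'(x) − (1/x²)·u(x) = f(x) for all x ∈ (0,1], together with the boundary conditions u(1) = 0 and u(x) → 0 as x → 0⁺. -/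
open Set Filter Topology intervalIntegral MeasureTheory

/-!
Splitting the integral at `ξ = x` gives the closed form
`u x = x/2 * (c + F x) - A x / (2x)` with `F x = ∫₀ˣ f`, `A x = ∫₀ˣ ξ² f` and
`c = ∫₀¹ (ξ² - 1) f`. By the fundamental theorem of calculus this is twice differentiable,
with `u' = (c + F)/2 + A/(2x²)` and `u'' = f - A/x³`, and the equation follows by algebra.
At `x = 1` the kernel vanishes identically, and as `x → 0⁺` the only delicate term is
`A x / x`, which tends to `A'(0) = 0`.
-/

theorem ContinuousOn.exists_continuous_eqOn_Icc {α β : Type*} [LinearOrder α]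
    [TopologicalSpace α] [OrderTopology α] [TopologicalSpace β] {a b : α} (hab : a ≤ b)
    {f : α → β} (hf : ContinuousOn f (Icc a b)) :
    ∃ g : α → β, Continuous g ∧ EqOn g f (Icc a b) :=
  ⟨IccExtend hab ((Icc a b).domRestrict f), continuous_IccExtend_iff.2 hf.domRestrict,
    fun _ hx => IccExtend_of_mem hab _ hx⟩

theorem intervalIntegral.integral_eq_add_of_eqOn {E : Type*} [NormedAddCommGroup E]
    [NormedSpace ℝ E] {h p q : ℝ → E} {a b c : ℝ} (hp : IntervalIntegrable p volume a b)
    (hq : IntervalIntegrable q volume b c) (hhp : EqOn h p (uIcc a b))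
    (hhq : EqOn h q (uIcc b c)) :
    ∫ x in a..c, h x = (∫ x in a..b, p x) + ∫ x in b..c, q x := by
  rw [← integral_congr hhp, ← integral_congr hhq]
  exact (integral_add_adjacent_intervals (hp.congr (hhp.symm.mono uIoc_subset_uIcc))
    (hq.congr (hhq.symm.mono uIoc_subset_uIcc))).symm

noncomputable def greenKernel (x ξ : ℝ) : ℂ :=
  if ξ ≤ x then (x:ℂ)*(ξ:ℂ)^2/2 - (ξ:ℂ)^2/(2*(x:ℂ)) else (x:ℂ)*(ξ:ℂ)^2/2 - (x:ℂ)/2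

theorem greenKernel_of_le {x ξ : ℝ} (h : ξ ≤ x) :
    greenKernel x ξ = x / 2 * ((ξ:ℂ)^2 - 1) + (x / 2 - (ξ:ℂ)^2 / (2 * x)) := by
  rw [greenKernel, if_pos h]
  ring

theorem greenKernel_of_ge {x ξ : ℝ} (h : x ≤ ξ) :
    greenKernel x ξ = x / 2 * ((ξ:ℂ)^2 - 1) := by
  rcases h.eq_or_lt with rfl | h
  · rw [greenKernel_of_le le_rfl]
    field_simp
    ring
  · rw [greenKernel, if_neg h.not_ge]
    ring

theorem greenKernel_one {ξ : ℝ} (h : ξ ≤ 1) : greenKernel 1 ξ = 0 := by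
  simp [greenKernel, h]

noncomputable def greenForm (c : ℂ) (F A : ℝ → ℂ) (x : ℝ) : ℂ :=
  x / 2 * (c + F x) - A x / (2 * x)

noncomputable def greenFormDeriv (c : ℂ) (F A : ℝ → ℂ) (x : ℝ) : ℂ :=
  (c + F x) / 2 + A x / (2 * (x:ℂ)^2)

theorem integral_greenKernel_mul {φ : ℝ → ℂ} (hφ : Continuous φ) {x : ℝ} (hx : x ∈ Ioc 0 1) :
    ∫ ξ in (0:ℝ)..1, greenKernel x ξ * φ ξ =
      greenForm (∫ ξ in (0:ℝ)..1, ((ξ:ℂ)^2 - 1) * φ ξ) (fun y => ∫ ξ in (0:ℝ)..y, φ ξ)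
        (fun y => ∫ ξ in (0:ℝ)..y, (ξ:ℂ)^2 * φ ξ) x := by
  have hx0 : (x:ℂ) ≠ 0 := by exact_mod_cast hx.1.ne'
  have integrable : ∀ {a b : ℝ} {ψ : ℝ → ℂ}, Continuous ψ → IntervalIntegrable ψ volume a b :=
    fun h => h.intervalIntegrable _ _
  rw [integral_eq_add_of_eqOn
      (p := fun ξ => x / 2 * (((ξ:ℂ)^2 - 1) * φ ξ)
        + (x / 2 * φ ξ - (2 * x : ℂ)⁻¹ * ((ξ:ℂ)^2 * φ ξ)))
      (q := fun ξ => x / 2 * (((ξ:ℂ)^2 - 1) * φ ξ)) (b := x)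
      (integrable (by fun_prop)) (integrable (by fun_prop))]
  · have hsplit := integral_add_adjacent_intervals (a := 0) (b := x) (c := 1)
      (f := fun ξ => ((ξ:ℂ)^2 - 1) * φ ξ) (integrable (by fun_prop)) (integrable (by fun_prop))
    rw [greenForm, integral_add (integrable (by fun_prop)) (integrable (by fun_prop)),
      integral_sub (integrable (by fun_prop)) (integrable (by fun_prop)),
      intervalIntegral.integral_const_mul, intervalIntegral.integral_const_mul,
      intervalIntegral.integral_const_mul, intervalIntegral.integral_const_mul,
      ← hsplit]
    field_simp
    ring
  · intro ξ hξ
    rw [uIcc_of_le hx.1.le] at hξ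
    simp only [greenKernel_of_le hξ.2]
    field_simp
  · intro ξ hξ
    rw [uIcc_of_le hx.2] at hξ
    simp only [greenKernel_of_ge hξ.1]
    ring

theorem hasDerivAt_greenForm {F A φ : ℝ → ℂ} {x : ℝ} (c : ℂ) (hx : x ≠ 0)
    (hF : HasDerivAt F (φ x) x) (hA : HasDerivAt A ((x:ℂ)^2 * φ x) x) :
    HasDerivAt (greenForm c F A) (greenFormDeriv c F A x) x := by
  have hx0 : (x:ℂ) ≠ 0 := by exact_mod_cast hx
  have hid : HasDerivAt (fun y : ℝ => (y:ℂ)) 1 x := (hasDerivAt_id x).ofReal_comp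
  refine (((hid.div_const 2).mul (hF.const_add c)).sub
    (hA.div (hid.const_mul 2) (by simpa using hx0))).congr_deriv ?_
  rw [greenFormDeriv]
  field_simp
  ring

theorem hasDerivAt_greenFormDeriv {F A φ : ℝ → ℂ} {x : ℝ} (c : ℂ) (hx : x ≠ 0)
    (hF : HasDerivAt F (φ x) x) (hA : HasDerivAt A ((x:ℂ)^2 * φ x) x) :
    HasDerivAt (greenFormDeriv c F A) (φ x - A x / (x:ℂ)^3) x := by
  have hx0 : (x:ℂ) ≠ 0 := by exact_mod_cast hx
  have hsq : HasDerivAt (fun y : ℝ => 2 * (y:ℂ)^2) (2 * (2 * (x:ℂ))) x := by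
    simpa using ((hasDerivAt_pow 2 (x:ℂ)).comp_ofReal).const_mul 2
  refine (((hF.const_add c).div_const 2).add (hA.div hsq (by simpa using hx0))).congr_deriv ?_
  field_simp
  ring

theorem greenForm_ode (c : ℂ) (F A φ : ℝ → ℂ) {x : ℝ} (hx : x ≠ 0) :
    (φ x - A x / (x:ℂ)^3) + 1 / (x:ℂ) * greenFormDeriv c F A x
      - 1 / (x:ℂ)^2 * greenForm c F A x = φ x := by
  have hx0 : (x:ℂ) ≠ 0 := by exact_mod_cast hx
  rw [greenForm, greenFormDeriv]
  field_simp
  ring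

theorem tendsto_greenForm_nhdsGT_zero {F A : ℝ → ℂ} (c : ℂ) (hF : ContinuousAt F 0)
    (hA₀ : A 0 = 0) (hA : HasDerivAt A 0 0) :
    Tendsto (greenForm c F A) (𝓝[>] 0) (𝓝 0) := by
  have hlin : Tendsto (fun y : ℝ => (y:ℂ) / 2 * (c + F y)) (𝓝 0) (𝓝 0) := by
    simpa using ((Complex.continuous_ofReal.tendsto 0).div_const 2).mul (hF.const_add c)
  have hslope := hA.tendsto_slope_zero_right
  convert (hlin.mono_left nhdsWithin_le_nhds).sub (hslope.div_const 2) using 2 with y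
  · simp [greenForm, hA₀, Complex.real_smul]
    ring
  · simp

/-- The Green's function solves the singular two-point boundary problem:
with `g(x,ξ) = xξ²/2 − ξ²/(2x)` for `ξ ≤ x` and `g(x,ξ) = xξ²/2 − x/2` for
`ξ ≥ x`, the function `u(x) = ∫₀¹ g(x,ξ) f(ξ) dξ` is twice differentiable on
`(0,1]`, satisfies `u'' + (1/x)u' − (1/x²)u = f` there, and satisfies the
boundary conditions `u(1) = 0` and `u(x) → 0` as `x → 0⁺`. -/
theorem greens_function_solves_model
    (f : ℝ → ℂ) (hf : ContinuousOn f (Set.Icc (0:ℝ) 1))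
    (g : ℝ → ℝ → ℂ)
    (hg : ∀ x ∈ Set.Ioc (0:ℝ) 1, ∀ ξ ∈ Set.Icc (0:ℝ) 1,
      g x ξ = if ξ ≤ x then (x:ℂ)*(ξ:ℂ)^2/2 - (ξ:ℂ)^2/(2*(x:ℂ))
              else (x:ℂ)*(ξ:ℂ)^2/2 - (x:ℂ)/2)
    (u : ℝ → ℂ)
    (hu : ∀ x ∈ Set.Ioc (0:ℝ) 1, u x = ∫ ξ in (0:ℝ)..1, g x ξ * f ξ) :
    (∃ u' u'' : ℝ → ℂ,
      (∀ x ∈ Set.Ioc (0:ℝ) 1, HasDerivWithinAt u (u' x) (Set.Ioc (0:ℝ) 1) x) ∧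
      (∀ x ∈ Set.Ioc (0:ℝ) 1, HasDerivWithinAt u' (u'' x) (Set.Ioc (0:ℝ) 1) x) ∧
      (∀ x ∈ Set.Ioc (0:ℝ) 1,
        u'' x + (1/(x:ℂ)) * u' x - (1/(x:ℂ)^2) * u x = f x)) ∧
    u 1 = 0 ∧
    Tendsto u (𝓝[>] (0:ℝ)) (𝓝 (0:ℂ)) := by
  obtain ⟨φ, hφ, hφf⟩ := hf.exists_continuous_eqOn_Icc zero_le_one
  have hgK : ∀ x ∈ Ioc (0:ℝ) 1, ∀ ξ ∈ Icc (0:ℝ) 1, g x ξ = greenKernel x ξ := hg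
  set c : ℂ := ∫ ξ in (0:ℝ)..1, ((ξ:ℂ)^2 - 1) * φ ξ
  set F : ℝ → ℂ := fun x => ∫ ξ in (0:ℝ)..x, φ ξ
  set A : ℝ → ℂ := fun x => ∫ ξ in (0:ℝ)..x, (ξ:ℂ)^2 * φ ξ
  have hF : ∀ x, HasDerivAt F (φ x) x := fun x => (hφ.integral_hasStrictDerivAt 0 x).hasDerivAt
  have hA : ∀ x : ℝ, HasDerivAt A ((x:ℂ)^2 * φ x) x := fun x =>
    ((by fun_prop : Continuous fun ξ : ℝ => (ξ:ℂ)^2 * φ ξ).integral_hasStrictDerivAt 0 x).hasDerivAt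
  have hu_eq : ∀ x ∈ Ioc (0:ℝ) 1, u x = greenForm c F A x := by
    intro x hx
    rw [hu x hx, ← integral_greenKernel_mul hφ hx]
    refine integral_congr fun ξ hξ => ?_
    rw [uIcc_of_le zero_le_one] at hξ
    simp only [hgK x hx ξ hξ, hφf hξ]
  refine ⟨⟨greenFormDeriv c F A, fun x => φ x - A x / (x:ℂ)^3,
    fun x hx => ?_, fun x hx => ?_, fun x hx => ?_⟩, ?_, ?_⟩
  · exact (hasDerivAt_greenForm c hx.1.ne' (hF x) (hA x)).hasDerivWithinAt.congr hu_eq (hu_eq x hx)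
  · exact (hasDerivAt_greenFormDeriv c hx.1.ne' (hF x) (hA x)).hasDerivWithinAt
  · rw [hu_eq x hx, ← hφf (Ioc_subset_Icc_self hx)]
    exact greenForm_ode c F A φ hx.1.ne'
  · rw [hu 1 ⟨zero_lt_one, le_rfl⟩, ← integral_zero (a := 0) (b := 1) (E := ℂ)]
    refine integral_congr fun ξ hξ => ?_
    rw [uIcc_of_le zero_le_one] at hξ
    simp only [hgK 1 ⟨zero_lt_one, le_rfl⟩ ξ hξ, greenKernel_one hξ.2, zero_mul]
  · refine (tendsto_greenForm_nhdsGT_zero c (hF 0).continuousAt integral_same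
      (by simpa using hA 0)).congr' ?_
    filter_upwards [Ioc_mem_nhdsGT zero_lt_one] with x hx
    exact (hu_eq x hx).symm
end

section
/- Obstruction for Dirichlet boundary conditions in the second example: let f and u be complex-analytic on an open set containing [0,1], suppose u(0) = 0, u(1) = 0, and u''(x) + (4/x)·u'(x) + (2/x²)·u(x) = f(x) for all x ∈ (0,1]. Then the forcing function necessarily satisfies the constraint ∫₀¹ ξ²·(1−ξ)·f(ξ) dξ = 0. (Equivalently, writing f(x) = Σ_{n≥0} bₙ xⁿ, the coefficients satisfy Σ_{n≥0} bₙ/((n+3)(n+4)) = 0.) -/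
/-!
Multiplying the equation by `x²` turns it into `(x²u)'' = x² f` on `(0,1]`, since
`x²u'' + 4xu' + 2u` is the second derivative of `w = x²u`. Integrating `(1 - ξ) w''(ξ)` over
`[0,1]` gives the first-order Taylor remainder `w(1) - w(0) - w'(0)` of `w` at `0`, and this
equals `u(1) = 0` because `w` vanishes to second order at `0`.
-/

open Set intervalIntegral

section

variable {E : Type*} [NormedAddCommGroup E] [NormedSpace ℝ E]

theorem hasDerivAt_sq_smul {u : ℝ → E} {u' : E} {x : ℝ} (hu : HasDerivAt u u' x) :
    HasDerivAt (fun t => t ^ 2 • u t) (x ^ 2 • u' + (2 * x) • u x) x := by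
  simpa using (hasDerivAt_pow 2 x).fun_smul hu

theorem hasDerivAt_sq_smul_add_two_mul_smul {u u' u'' : ℝ → E} {x : ℝ}
    (hu : HasDerivAt u (u' x) x) (hu' : HasDerivAt u' (u'' x) x) :
    HasDerivAt (fun t => t ^ 2 • u' t + (2 * t) • u t)
      (x ^ 2 • u'' x + (4 * x) • u' x + (2 : ℝ) • u x) x := by
  have h2 : HasDerivAt (fun t : ℝ => 2 * t) 2 x := by simpa using (hasDerivAt_id' x).const_mul 2
  refine ((hasDerivAt_sq_smul hu').add (h2.fun_smul hu)).congr_deriv ?_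
  module

theorem integral_sub_smul_second_deriv [CompleteSpace E] {w w' w'' : ℝ → E} {a b : ℝ}
    (hw : ∀ x ∈ uIcc a b, HasDerivAt w (w' x) x) (hw' : ∀ x ∈ uIcc a b, HasDerivAt w' (w'' x) x)
    (hint : IntervalIntegrable w'' MeasureTheory.volume a b) :
    ∫ x in a..b, (b - x) • w'' x = w b - w a - (b - a) • w' a := by
  have hF : ∀ x ∈ uIcc a b, HasDerivAt (fun t => (b - t) • w' t + w t) ((b - x) • w'' x) x := by
    intro x hx
    refine (((hasDerivAt_id' x).const_sub b).fun_smul (hw' x hx)).add (hw x hx) |>.congr_deriv ?_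
    module
  rw [integral_eq_sub_of_hasDerivAt hF (hint.continuousOn_smul (by fun_prop))]
  simp only [sub_self, zero_smul, zero_add]
  abel

end

theorem ofReal_sq_mul_add_div_mul_add_div_sq_mul {x : ℝ} (hx : x ≠ 0) (a b c : ℂ) :
    (x : ℂ) ^ 2 * (a + 4 / x * b + 2 / x ^ 2 * c) = x ^ 2 • a + (4 * x) • b + (2 : ℝ) • c := by
  have hx' : (x : ℂ) ≠ 0 := by exact_mod_cast hx
  simp only [Complex.real_smul]
  push_cast
  field_simp

theorem second_example_dirichlet_obstruction_general
    (f u : ℝ → ℂ)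
    (hu : AnalyticOnNhd ℝ u (Set.Icc (0:ℝ) 1))
    (hu1 : u 1 = 0)
    (hode : ∀ x ∈ Set.Ioc (0:ℝ) 1,
      deriv (deriv u) x + (4/(x:ℂ)) * deriv u x + (2/(x:ℂ)^2) * u x = f x) :
    ∫ ξ in (0:ℝ)..1, (ξ:ℂ)^2 * (1 - (ξ:ℂ)) * f ξ = 0 := by
  rw [← uIcc_of_le zero_le_one] at hu
  have hu' := hu.deriv
  have hu'' := hu'.deriv
  set w'' : ℝ → ℂ := fun x => x ^ 2 • deriv (deriv u) x + (4 * x) • deriv u x + (2 : ℝ) • u x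
  have hw'' : ContinuousOn w'' (uIcc 0 1) := by
    have := hu.continuousOn; have := hu'.continuousOn; have := hu''.continuousOn
    fun_prop
  have hintegrand : ∀ x ∈ Ioc (0 : ℝ) 1, (x : ℂ) ^ 2 * (1 - (x : ℂ)) * f x = (1 - x) • w'' x := by
    intro x hx
    rw [← hode x hx, mul_right_comm, ofReal_sq_mul_add_div_mul_add_div_sq_mul hx.1.ne',
      mul_comm, ← Complex.ofReal_one, ← Complex.ofReal_sub, ← Complex.real_smul]
  calc ∫ ξ in (0:ℝ)..1, (ξ:ℂ)^2 * (1 - (ξ:ℂ)) * f ξ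
      = ∫ ξ in (0:ℝ)..1, (1 - ξ) • w'' ξ := by
        simp only [integral_of_le zero_le_one]
        exact MeasureTheory.setIntegral_congr_fun measurableSet_Ioc hintegrand
    _ = 0 := by
        rw [integral_sub_smul_second_deriv
          (fun x hx => hasDerivAt_sq_smul (hu x hx).differentiableAt.hasDerivAt)
          (fun x hx => hasDerivAt_sq_smul_add_two_mul_smul (hu x hx).differentiableAt.hasDerivAt
            (hu' x hx).differentiableAt.hasDerivAt)
          hw''.intervalIntegrable]
        simp [hu1]

/-- Obstruction for Dirichlet boundary conditions in the second example: if
`u` is analytic on a neighbourhood of `[0,1]` with `u(0) = u(1) = 0` and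
`u'' + (4/x)u' + (2/x²)u = f` on `(0,1]` for an analytic forcing `f`, then
necessarily `∫₀¹ ξ²(1−ξ) f(ξ) dξ = 0`. -/
theorem second_example_dirichlet_obstruction
    (f u : ℝ → ℂ)
    (hf : AnalyticOnNhd ℝ f (Set.Icc (0:ℝ) 1))
    (hu : AnalyticOnNhd ℝ u (Set.Icc (0:ℝ) 1))
    (hu0 : u 0 = 0) (hu1 : u 1 = 0)
    (hode : ∀ x ∈ Set.Ioc (0:ℝ) 1,
      deriv (deriv u) x + (4/(x:ℂ)) * deriv u x + (2/(x:ℂ)^2) * u x = f x) :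
    ∫ ξ in (0:ℝ)..1, (ξ:ℂ)^2 * (1 - (ξ:ℂ)) * f ξ = 0 :=
  second_example_dirichlet_obstruction_general f u hu hu1 hode
end

section
/- Well-posedness of the second example with initial conditions: for every function f that is complex-analytic on an open set containing [0,1], there exists a unique function u, complex-analytic on an open set containing [0,1], such that u(0) = 0, u'(0) = 0, and u''(x) + (4/x)·u'(x) + (2/x²)·u(x) = f(x) for all x ∈ (0,1]. -/
/-!
Multiplying by `x²` turns the operator into an exact second derivative:
`x² (u'' + (4/x) u' + (2/x²) u) = (x² u)''`. Hence a solution is `u = F / x²`, where `F` is the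
double primitive of `x² f` vanishing with its derivative at `0`. It is analytic because primitives
of analytic functions are analytic (integrate the power series termwise), and `F / x²` extends
analytically across `0` since `F(0) = F'(0) = 0`. For uniqueness, two solutions `u`, `v` give
functions `x² u`, `x² v` with the same second derivative on `[0, 1]` and the same value and
derivative (zero) at `0`, so they agree.
-/

open Set Filter Topology

namespace FormalMultilinearSeries

variable {𝕜 E : Type*} [RCLike 𝕜] [NormedAddCommGroup E] [NormedSpace 𝕜 E]

noncomputable def antideriv (p : FormalMultilinearSeries 𝕜 𝕜 E) : FormalMultilinearSeries 𝕜 𝕜 E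
  | 0 => 0
  | n + 1 => ContinuousMultilinearMap.mkPiRing 𝕜 (Fin (n + 1)) (((n : 𝕜) + 1)⁻¹ • p.coeff n)

variable (p : FormalMultilinearSeries 𝕜 𝕜 E)

@[simp]
theorem antideriv_zero : p.antideriv 0 = 0 := rfl

@[simp]
theorem coeff_antideriv_succ (n : ℕ) :
    p.antideriv.coeff (n + 1) = ((n : 𝕜) + 1)⁻¹ • p.coeff n := by
  simp only [antideriv, coeff, ContinuousMultilinearMap.mkPiRing_apply, Pi.one_apply,
    Finset.prod_const_one, one_smul]

theorem norm_antideriv_succ_le (n : ℕ) : ‖p.antideriv (n + 1)‖ ≤ ‖p n‖ := by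
  rw [norm_apply_eq_norm_coef, norm_apply_eq_norm_coef, coeff_antideriv_succ, norm_smul]
  refine mul_le_of_le_one_left (norm_nonneg _) ?_
  rw [norm_inv, ← Nat.cast_succ, RCLike.norm_natCast]
  exact inv_le_one_of_one_le₀ (by simp)

theorem radius_le_radius_antideriv : p.radius ≤ p.antideriv.radius := by
  refine ENNReal.le_of_forall_nnreal_lt fun r hr => ?_
  obtain ⟨C, hC0, hC⟩ := p.norm_mul_pow_le_of_lt_radius hr
  refine p.antideriv.le_radius_of_bound (C * r) fun n => ?_
  cases n with
  | zero => simp only [antideriv_zero, norm_zero, zero_mul]; positivity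
  | succ n =>
    calc ‖p.antideriv (n + 1)‖ * (r : ℝ) ^ (n + 1) ≤ (‖p n‖ * (r : ℝ) ^ n) * r := by
          rw [pow_succ, ← mul_assoc]
          exact mul_le_mul_of_nonneg_right
            (mul_le_mul_of_nonneg_right (p.norm_antideriv_succ_le n) (by positivity)) r.2
      _ ≤ C * r := by gcongr; exact hC n

theorem derivSeries_antideriv_coeff_one (n : ℕ) :
    p.antideriv.derivSeries.coeff n 1 = p.coeff n := by
  rw [derivSeries_coeff_one, coeff_antideriv_succ, ← Nat.cast_smul_eq_nsmul 𝕜, smul_smul]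
  push_cast
  rw [mul_inv_cancel₀ (by exact_mod_cast n.succ_ne_zero), one_smul]

variable [CompleteSpace E]

theorem hasDerivAt_sum_antideriv {y : 𝕜} (hy : ‖y‖ₑ < p.radius) :
    HasDerivAt p.antideriv.sum (p.sum y) y := by
  have hy' := hy.trans_le p.radius_le_radius_antideriv
  have hsum : HasSum (fun n => p.antideriv.derivSeries n (fun _ => y) 1)
      (p.antideriv.derivSeries.sum y 1) :=
    (p.antideriv.derivSeries.hasSum (x := y) (by
      simpa using hy'.trans_le p.antideriv.radius_le_radius_derivSeries)).mapL
      (ContinuousLinearMap.apply 𝕜 E 1)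
  have hterm : ∀ n, p.antideriv.derivSeries n (fun _ => y) 1 = p n (fun _ => y) := by
    intro n
    rw [apply_eq_pow_smul_coeff, apply_eq_pow_smul_coeff, _root_.smul_apply,
      derivSeries_antideriv_coeff_one]
  simp only [hterm] at hsum
  have := (p.antideriv.hasFDerivAt_sum hy').hasDerivAt
  rwa [hsum.unique (p.hasSum (by simpa using hy))] at this

end FormalMultilinearSeries

theorem analyticAt_of_eventually_hasDerivAt {𝕜 E : Type*} [RCLike 𝕜] [NormedAddCommGroup E]
    [NormedSpace 𝕜 E] [CompleteSpace E] {f F : 𝕜 → E} {x : 𝕜} (hf : AnalyticAt 𝕜 f x)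
    (hF : ∀ᶠ y in 𝓝 x, HasDerivAt F (f y) y) : AnalyticAt 𝕜 F x := by
  obtain ⟨p, r, hp⟩ := hf
  obtain ⟨ε, hε, hεF⟩ := Metric.mem_nhds_iff.1 hF
  set s := Metric.eball x (min r (ENNReal.ofReal ε))
  have hs : s ∈ 𝓝 x := Metric.eball_mem_nhds x (lt_min hp.r_pos (by simpa using hε))
  have hG : ∀ y ∈ s, HasDerivAt (fun z => p.antideriv.sum (z - x)) (f y) y := by
    intro y hy
    have hyr : ‖y - x‖ₑ < r := by
      rw [← edist_eq_enorm_sub]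
      exact (Metric.mem_eball.1 hy).trans_le (min_le_left _ _)
    have hfy : f y = p.sum (y - x) := by
      simpa using hp.sum (y := y - x) (by simpa [edist_eq_enorm_sub] using hyr)
    rw [hfy]
    exact (p.hasDerivAt_sum_antideriv (hyr.trans_le hp.r_le)).comp_sub_const y x
  have hGan : AnalyticAt 𝕜 (fun z => p.antideriv.sum (z - x)) x := by
    have := (p.antideriv.hasFPowerSeriesOnBall
      (hp.r_pos.trans_le (hp.r_le.trans p.radius_le_radius_antideriv))).comp_sub x
    simpa using this.analyticAt
  have hsF : ∀ y ∈ s, HasDerivAt F (f y) y := fun y hy =>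
    hεF (edist_lt_ofReal.1 ((Metric.mem_eball.1 hy).trans_le (min_le_right _ _)))
  obtain ⟨a, ha⟩ := Metric.isOpen_eball.exists_eq_add_of_deriv_eq Metric.isPreconnected_eball
    (fun y hy => (hsF y hy).differentiableAt.differentiableWithinAt)
    (fun y hy => (hG y hy).differentiableAt.differentiableWithinAt)
    (fun y hy => by simp only [(hsF y hy).deriv, (hG y hy).deriv])
  exact (hGan.add analyticAt_const).congr (Filter.eventuallyEq_of_mem hs fun y hy => (ha hy).symm)

theorem AnalyticOnNhd.dslope {𝕜 E : Type*} [NontriviallyNormedField 𝕜] [NormedAddCommGroup E]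
    [NormedSpace 𝕜 E] {f : 𝕜 → E} {s : Set 𝕜} (hf : AnalyticOnNhd 𝕜 f s) (a : 𝕜) :
    AnalyticOnNhd 𝕜 (dslope f a) s := by
  intro y hy
  rcases eq_or_ne y a with rfl | hya
  · obtain ⟨p, hp⟩ := hf y hy
    exact ⟨_, hp.has_fpower_series_dslope_fslope⟩
  · have hslope : AnalyticAt 𝕜 (fun z => (z - a)⁻¹ • (f z - f a)) y :=
      ((analyticAt_id.sub analyticAt_const).inv (sub_ne_zero.2 hya)).smul
        ((hf y hy).sub analyticAt_const)
    refine hslope.congr ?_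
    filter_upwards [eventually_ne_nhds hya] with z hz
    rw [dslope_of_ne _ hz, slope_def_module]

theorem sub_sq_smul_dslope_dslope {𝕜 E : Type*} [NontriviallyNormedField 𝕜]
    [NormedAddCommGroup E] [NormedSpace 𝕜 E] {f : 𝕜 → E} {a : 𝕜} (h₀ : f a = 0)
    (h₁ : deriv f a = 0) (x : 𝕜) : (x - a) ^ 2 • dslope (dslope f a) a x = f x := by
  rw [sq, mul_smul, sub_smul_dslope, dslope_same, h₁, sub_zero, sub_smul_dslope, h₀, sub_zero]

theorem ContinuousOn.hasDerivAt_intervalIntegral {E : Type*} [NormedAddCommGroup E]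
    [NormedSpace ℝ E] [CompleteSpace E] {f : ℝ → E} {s : Set ℝ} (hf : ContinuousOn f s)
    (hs : IsOpen s) (hs' : s.OrdConnected) {a x : ℝ} (ha : a ∈ s) (hx : x ∈ s) :
    HasDerivAt (fun y => ∫ t in a..y, f t) (f x) x :=
  intervalIntegral.integral_hasDerivAt_right
    ((hf.mono (hs'.uIcc_subset ha hx)).intervalIntegrable)
    (hf.stronglyMeasurableAtFilter hs x hx) (hf.continuousAt (hs.mem_nhds hx))

theorem AnalyticOnNhd.intervalIntegral {E : Type*} [NormedAddCommGroup E] [NormedSpace ℝ E]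
    [CompleteSpace E] {f : ℝ → E} {s : Set ℝ} (hf : AnalyticOnNhd ℝ f s) (hs : IsOpen s)
    (hs' : s.OrdConnected) {a : ℝ} (ha : a ∈ s) :
    AnalyticOnNhd ℝ (fun y => ∫ t in a..y, f t) s := fun x hx =>
  analyticAt_of_eventually_hasDerivAt (hf x hx) <| eventually_of_mem (hs.mem_nhds hx)
    fun _ hy => hf.continuousOn.hasDerivAt_intervalIntegral hs hs' ha hy

theorem AnalyticOnNhd.exists_deriv_deriv_eq {E : Type*} [NormedAddCommGroup E]
    [NormedSpace ℝ E] [CompleteSpace E] {g : ℝ → E} {s : Set ℝ} (hg : AnalyticOnNhd ℝ g s)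
    (hs : IsOpen s) (hs' : s.OrdConnected) {a : ℝ} (ha : a ∈ s) :
    ∃ F : ℝ → E, AnalyticOnNhd ℝ F s ∧ F a = 0 ∧ deriv F a = 0 ∧
      ∀ x ∈ s, deriv (deriv F) x = g x := by
  set G := fun y => ∫ t in a..y, g t
  have hG : ∀ x ∈ s, HasDerivAt G (g x) x := fun x hx =>
    hg.continuousOn.hasDerivAt_intervalIntegral hs hs' ha hx
  have hF : ∀ x ∈ s, HasDerivAt (fun y => ∫ t in a..y, G t) (G x) x := fun x hx =>
    (hg.intervalIntegral hs hs' ha).continuousOn.hasDerivAt_intervalIntegral hs hs' ha hx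
  refine ⟨_, (hg.intervalIntegral hs hs' ha).intervalIntegral hs hs' ha,
    intervalIntegral.integral_same, by simp [G, (hF a ha).deriv], fun x hx => ?_⟩
  have hF' : deriv (fun y => ∫ t in a..y, G t) =ᶠ[𝓝 x] G :=
    eventually_of_mem (hs.mem_nhds hx) fun y hy => (hF y hy).deriv
  rw [hF'.deriv_eq, (hG x hx).deriv]

theorem AnalyticOnNhd.exists_isOpen_ordConnected {E : Type*} [NormedAddCommGroup E]
    [NormedSpace ℝ E] [CompleteSpace E] {f : ℝ → E} {a b : ℝ} (hf : AnalyticOnNhd ℝ f (Icc a b)) :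
    ∃ s, IsOpen s ∧ s.OrdConnected ∧ Icc a b ⊆ s ∧ AnalyticOnNhd ℝ f s := by
  obtain ⟨δ, hδ, hδf⟩ := isCompact_Icc.exists_thickening_subset_open (isOpen_analyticAt ℝ f) hf
  exact ⟨_, Metric.isOpen_thickening, convex_iff_ordConnected.1 ((convex_Icc a b).thickening δ),
    Metric.self_subset_thickening hδ _, fun x hx => hδf hx⟩

theorem eqOn_Icc_of_deriv_eq {E : Type*} [NormedAddCommGroup E] [NormedSpace ℝ E]
    {F G : ℝ → E} {a b : ℝ} (hF : AnalyticOnNhd ℝ F (Icc a b))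
    (hG : AnalyticOnNhd ℝ G (Icc a b)) (h₀ : F a = G a)
    (h₁ : EqOn (deriv F) (deriv G) (Icc a b)) : EqOn F G (Icc a b) := fun y hy =>
  eq_of_has_deriv_right_eq
    (fun x hx => (hF x (Ico_subset_Icc_self hx)).differentiableAt.hasDerivAt.hasDerivWithinAt)
    (fun x hx => h₁ (Ico_subset_Icc_self hx) ▸
      (hG x (Ico_subset_Icc_self hx)).differentiableAt.hasDerivAt.hasDerivWithinAt)
    (fun x hx => (hF x hx).continuousAt.continuousWithinAt)
    (fun x hx => (hG x hx).continuousAt.continuousWithinAt) h₀ y hy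

theorem eqOn_Icc_of_deriv_deriv_eq {E : Type*} [NormedAddCommGroup E] [NormedSpace ℝ E]
    [CompleteSpace E] {F G : ℝ → E} {a b : ℝ} (hF : AnalyticOnNhd ℝ F (Icc a b))
    (hG : AnalyticOnNhd ℝ G (Icc a b)) (h₀ : F a = G a) (h₁ : deriv F a = deriv G a)
    (h₂ : EqOn (deriv (deriv F)) (deriv (deriv G)) (Icc a b)) : EqOn F G (Icc a b) :=
  eqOn_Icc_of_deriv_eq hF hG h₀ (eqOn_Icc_of_deriv_eq hF.deriv hG.deriv h₁ h₂)

namespace SecondExample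

/-- The operator `T` of the second example. -/
noncomputable def op (u : ℝ → ℂ) (x : ℝ) : ℂ :=
  deriv (deriv u) x + (4 / (x : ℂ)) * deriv u x + (2 / (x : ℂ) ^ 2) * u x

def IsIVPSolution (f u : ℝ → ℂ) : Prop :=
  AnalyticOnNhd ℝ u (Icc 0 1) ∧ u 0 = 0 ∧ deriv u 0 = 0 ∧ ∀ x ∈ Ioc (0 : ℝ) 1, op u x = f x

variable {u : ℝ → ℂ} {x : ℝ}

theorem hasDerivAt_ofReal_mul {u' : ℂ} (hu : HasDerivAt u u' x) :
    HasDerivAt (fun y : ℝ => (y : ℂ) * u y) (u x + x * u') x := by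
  have hid : HasDerivAt (fun y : ℝ => (y : ℂ)) 1 x := (hasDerivAt_id (x : ℂ)).comp_ofReal
  exact (hid.mul hu).congr_deriv (by rw [one_mul])

theorem hasDerivAt_ofReal_sq_mul {u' : ℂ} (hu : HasDerivAt u u' x) :
    HasDerivAt (fun y : ℝ => (y : ℂ) ^ 2 * u y) (2 * x * u x + x ^ 2 * u') x := by
  have hsq : HasDerivAt (fun y : ℝ => (y : ℂ) ^ 2) (2 * x) x := by
    simpa using (hasDerivAt_pow 2 (x : ℂ)).comp_ofReal
  exact hsq.mul hu

theorem deriv_deriv_ofReal_sq_mul (hu : AnalyticAt ℝ u x) :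
    deriv (deriv fun y : ℝ => (y : ℂ) ^ 2 * u y) x =
      x ^ 2 * deriv (deriv u) x + 4 * x * deriv u x + 2 * u x := by
  have hfirst : deriv (fun y : ℝ => (y : ℂ) ^ 2 * u y) =ᶠ[𝓝 x]
      fun y => 2 * (y * u y) + y ^ 2 * deriv u y := by
    filter_upwards [hu.eventually_analyticAt] with y hy
    rw [(hasDerivAt_ofReal_sq_mul hy.differentiableAt.hasDerivAt).deriv]
    ring
  rw [hfirst.deriv_eq]
  refine (((hasDerivAt_ofReal_mul hu.differentiableAt.hasDerivAt).const_mul 2).add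
    (hasDerivAt_ofReal_sq_mul hu.deriv.differentiableAt.hasDerivAt)).deriv.trans ?_
  ring

theorem sq_mul_op (hx : x ≠ 0) :
    (x : ℂ) ^ 2 * op u x = x ^ 2 * deriv (deriv u) x + 4 * x * deriv u x + 2 * u x := by
  have hx' : (x : ℂ) ≠ 0 := Complex.ofReal_ne_zero.2 hx
  simp only [op]
  field_simp

theorem deriv_ofReal_sq_mul_zero (hu : DifferentiableAt ℝ u 0) :
    deriv (fun y : ℝ => (y : ℂ) ^ 2 * u y) 0 = 0 := by
  simp [(hasDerivAt_ofReal_sq_mul hu.hasDerivAt).deriv]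

theorem analyticAt_ofReal_sq_mul (hu : AnalyticAt ℝ u x) :
    AnalyticAt ℝ (fun y : ℝ => (y : ℂ) ^ 2 * u y) x :=
  ((Complex.ofRealCLM.analyticAt x).pow 2).mul hu

theorem exists_deriv_deriv_ofReal_sq_mul_eq {f : ℝ → ℂ} {s : Set ℝ} (hf : AnalyticOnNhd ℝ f s)
    (hs : IsOpen s) (hs' : s.OrdConnected) (h0 : (0 : ℝ) ∈ s) :
    ∃ u, AnalyticOnNhd ℝ u s ∧
      ∀ x ∈ s, deriv (deriv fun y : ℝ => (y : ℂ) ^ 2 * u y) x = x ^ 2 * f x := by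
  obtain ⟨F, hF, hF₀, hF₁, hF₂⟩ := AnalyticOnNhd.exists_deriv_deriv_eq
    (fun x hx => analyticAt_ofReal_sq_mul (hf x hx)) hs hs' h0
  refine ⟨dslope (dslope F 0) 0, (hF.dslope 0).dslope 0, fun x hx => ?_⟩
  have hFu : (fun y : ℝ => (y : ℂ) ^ 2 * dslope (dslope F 0) 0 y) = F := funext fun y => by
    simpa [Complex.real_smul] using sub_sq_smul_dslope_dslope hF₀ hF₁ y
  rw [hFu, hF₂ x hx]

theorem eq_zero_and_deriv_eq_zero_of_eventuallyEq {f : ℝ → ℂ} (hu : AnalyticAt ℝ u 0)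
    (hf : DifferentiableAt ℝ f 0)
    (h : deriv (deriv fun y : ℝ => (y : ℂ) ^ 2 * u y) =ᶠ[𝓝 0] fun y => (y : ℂ) ^ 2 * f y) :
    u 0 = 0 ∧ deriv u 0 = 0 := by
  have hexpand : (fun y : ℝ => y ^ 2 * deriv (deriv u) y + 4 * (y * deriv u y) + 2 * u y)
      =ᶠ[𝓝 0] fun y => (y : ℂ) ^ 2 * f y := by
    filter_upwards [hu.eventually_analyticAt, h] with y hy hyf
    rw [← hyf, deriv_deriv_ofReal_sq_mul hy]
    ring
  -- differentiating `x² u'' + 4 x u' + 2 u = x² f` at `0` gives `6 u'(0) = 0`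
  have hderiv := (((hasDerivAt_ofReal_sq_mul hu.deriv.deriv.differentiableAt.hasDerivAt).add
    ((hasDerivAt_ofReal_mul hu.deriv.differentiableAt.hasDerivAt).const_mul 4)).add
    (hu.differentiableAt.hasDerivAt.const_mul 2)).congr_of_eventuallyEq hexpand.symm
  have h6 := hderiv.unique (hasDerivAt_ofReal_sq_mul hf.hasDerivAt)
  have h2 := hexpand.self_of_nhds
  simp only [Complex.ofReal_zero] at h6 h2
  constructor
  · linear_combination h2 / 2
  · linear_combination h6 / 6

theorem exists_isIVPSolution {f : ℝ → ℂ} (hf : AnalyticOnNhd ℝ f (Icc 0 1)) :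
    ∃ u, IsIVPSolution f u := by
  obtain ⟨s, hs, hs', hIcc, hfs⟩ := hf.exists_isOpen_ordConnected
  have h0 : (0 : ℝ) ∈ s := hIcc (left_mem_Icc.2 zero_le_one)
  obtain ⟨u, hu, hweighted⟩ := exists_deriv_deriv_ofReal_sq_mul_eq hfs hs hs' h0
  obtain ⟨hu₀, hu₁⟩ := eq_zero_and_deriv_eq_zero_of_eventuallyEq (hu 0 h0)
    (hfs 0 h0).differentiableAt (eventually_of_mem (hs.mem_nhds h0) hweighted)
  refine ⟨u, hu.mono hIcc, hu₀, hu₁, fun x hx => ?_⟩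
  have hxs := hIcc (Ioc_subset_Icc_self hx)
  have := hweighted x hxs
  rw [deriv_deriv_ofReal_sq_mul (hu x hxs), ← sq_mul_op hx.1.ne'] at this
  exact mul_left_cancel₀ (pow_ne_zero 2 (Complex.ofReal_ne_zero.2 hx.1.ne')) this

theorem IsIVPSolution.deriv_deriv_ofReal_sq_mul {f : ℝ → ℂ} (hu : IsIVPSolution f u)
    (hx : x ∈ Icc (0 : ℝ) 1) :
    deriv (deriv fun y : ℝ => (y : ℂ) ^ 2 * u y) x = x ^ 2 * f x := by
  rw [SecondExample.deriv_deriv_ofReal_sq_mul (hu.1 x hx)]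
  rcases hx.1.eq_or_lt with rfl | hx₀
  · simp [hu.2.1]
  · rw [← hu.2.2.2 x ⟨hx₀, hx.2⟩, sq_mul_op hx₀.ne']

theorem IsIVPSolution.eqOn {f v : ℝ → ℂ} (hv : IsIVPSolution f v) (hu : IsIVPSolution f u) :
    EqOn v u (Icc 0 1) := by
  have h0 : (0 : ℝ) ∈ Icc (0 : ℝ) 1 := left_mem_Icc.2 zero_le_one
  have hweighted := eqOn_Icc_of_deriv_deriv_eq
    (fun x hx => analyticAt_ofReal_sq_mul (hv.1 x hx))
    (fun x hx => analyticAt_ofReal_sq_mul (hu.1 x hx)) (by simp)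
    ((deriv_ofReal_sq_mul_zero (hv.1 0 h0).differentiableAt).trans
      (deriv_ofReal_sq_mul_zero (hu.1 0 h0).differentiableAt).symm)
    (fun x hx => (hv.deriv_deriv_ofReal_sq_mul hx).trans (hu.deriv_deriv_ofReal_sq_mul hx).symm)
  intro x hx
  rcases hx.1.eq_or_lt with rfl | hx₀
  · exact hv.2.1.trans hu.2.1.symm
  · exact mul_left_cancel₀ (pow_ne_zero 2 (Complex.ofReal_ne_zero.2 hx₀.ne')) (hweighted hx)

end SecondExample

/-- Well-posedness of the second example with initial conditions: for every
`f` analytic on a neighbourhood of `[0,1]` there is a function `u`, analytic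
on a neighbourhood of `[0,1]`, with `u(0) = u'(0) = 0` and
`u'' + (4/x)u' + (2/x²)u = f` on `(0,1]`; it is unique on `[0,1]`. -/
theorem second_example_wellposed_initial_conditions
    (f : ℝ → ℂ) (hf : AnalyticOnNhd ℝ f (Set.Icc (0:ℝ) 1)) :
    ∃ u : ℝ → ℂ,
      (AnalyticOnNhd ℝ u (Set.Icc (0:ℝ) 1) ∧ u 0 = 0 ∧ deriv u 0 = 0 ∧
        ∀ x ∈ Set.Ioc (0:ℝ) 1,
          deriv (deriv u) x + (4/(x:ℂ)) * deriv u x + (2/(x:ℂ)^2) * u x = f x) ∧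
      ∀ v : ℝ → ℂ,
        (AnalyticOnNhd ℝ v (Set.Icc (0:ℝ) 1) ∧ v 0 = 0 ∧ deriv v 0 = 0 ∧
          ∀ x ∈ Set.Ioc (0:ℝ) 1,
            deriv (deriv v) x + (4/(x:ℂ)) * deriv v x + (2/(x:ℂ)^2) * v x = f x) →
        Set.EqOn v u (Set.Icc (0:ℝ) 1) := by
  obtain ⟨u, hu⟩ := SecondExample.exists_isIVPSolution hf
  exact ⟨u, hu, fun v hv => SecondExample.IsIVPSolution.eqOn hv hu⟩
end

section
/- Triangular basis with strictly increasing orders (content of Lemma 1 in the Hahn series model): let K be a field and let u₁, …, uₙ be linearly independent elements of the ring of Hahn series over K with real exponents (formal series Σ a_e x^e with well-ordered support in ℝ). Then there exist a basis v₁, …, vₙ of the K-linear span of u₁, …, uₙ and real numbers e₁ < e₂ < ⋯ < eₙ such that for each i the order of vᵢ is eᵢ with leading coefficient 1 (the coefficient of x^{eᵢ} in vᵢ is 1), and the coefficient of x^{eᵢ} in vⱼ is 0 for all j > i; in particular the matrix of coefficients (coeff_{eᵢ}(vⱼ))_{i,j} is lower unitriangular. -/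
/-!
Inside the finite-dimensional space `W` spanned by the `uᵢ`, pick for every order `g` attained by a
nonzero element a monic element of order `g`. Series with distinct orders are linearly independent,
and these monic elements span `W` by Gaussian elimination from the lowest order upwards. Hence
exactly `n` orders occur, and listing them increasingly gives the triangular basis: the `j`-th
element has order `eⱼ > eᵢ`, so its coefficient at `eᵢ` vanishes.
-/

open Submodule HahnSeries

namespace HahnSeries

section Coefficients

variable {Γ R : Type*}

theorem leadingCoeff_eq_coeff_of_orderTop_eq [PartialOrder Γ] [Zero R] {x : HahnSeries Γ R}
    {g : Γ} (h : x.orderTop = g) : x.leadingCoeff = x.coeff g := by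
  have hx : x ≠ 0 := by simp [← orderTop_ne_top, h]
  rw [leadingCoeff_of_ne_zero hx]
  congr
  simp [h]

variable [LinearOrder Γ] [DivisionRing R]

theorem orderTop_smul_of_ne_zero {c : R} (hc : c ≠ 0) (x : HahnSeries Γ R) :
    (c • x).orderTop = x.orderTop :=
  le_antisymm (by simpa [smul_smul, hc] using orderTop_le_orderTop_smul c⁻¹ (c • x))
    (orderTop_le_orderTop_smul c x)

theorem leadingCoeff_smul (c : R) (x : HahnSeries Γ R) :
    (c • x).leadingCoeff = c * x.leadingCoeff := by
  rcases eq_or_ne c 0 with rfl | hc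
  · simp
  rcases eq_or_ne x 0 with rfl | hx
  · simp
  obtain ⟨g, hg⟩ := WithTop.ne_top_iff_exists.mp (orderTop_ne_top.mpr hx)
  rw [leadingCoeff_eq_coeff_of_orderTop_eq hg.symm,
    leadingCoeff_eq_coeff_of_orderTop_eq ((orderTop_smul_of_ne_zero hc x).trans hg.symm)]
  rfl

end Coefficients

variable {Γ K : Type*} [LinearOrder Γ] [DivisionRing K]

/-- The coefficient of the sum at the smallest order present only sees the term of that order. -/
theorem linearIndependent_of_injective_orderTop {ι : Type*} {w : ι → HahnSeries Γ K}
    (hw0 : ∀ i, w i ≠ 0) (hw : Function.Injective fun i ↦ (w i).orderTop) :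
    LinearIndependent K w := by
  classical
  rw [linearIndependent_iff']
  intro s c hsum i hi
  by_contra hci
  obtain ⟨i₀, hi₀, hmin⟩ := (s.filter (c · ≠ 0)).exists_min_image (fun j ↦ (w j).orderTop)
    ⟨i, Finset.mem_filter.mpr ⟨hi, hci⟩⟩
  obtain ⟨g, hg⟩ := WithTop.ne_top_iff_exists.mp (orderTop_ne_top.mpr (hw0 i₀))
  have hcoeff : (∑ j ∈ s, c j • w j).coeff g = c i₀ * (w i₀).leadingCoeff := by
    rw [coeff_sum, Finset.sum_eq_single i₀, leadingCoeff_eq_coeff_of_orderTop_eq hg.symm]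
    · rfl
    · intro j hj hji₀
      by_cases hcj : c j = 0
      · simp [hcj]
      have hlt : (w i₀).orderTop < (w j).orderTop :=
        (hmin j (Finset.mem_filter.mpr ⟨hj, hcj⟩)).lt_of_ne (hw.ne (Ne.symm hji₀))
      rw [coeff_smul, coeff_eq_zero_of_lt_orderTop (hg ▸ hlt), smul_zero]
    · exact fun h ↦ absurd (Finset.mem_filter.mp hi₀).1 h
  rw [hsum, coeff_zero] at hcoeff
  exact mul_ne_zero (Finset.mem_filter.mp hi₀).2 (leadingCoeff_ne_zero.mpr (hw0 i₀)) hcoeff.symm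

-- Since `orderTop 0 = ⊤`, only nonzero elements of `W` contribute.
def orders (W : Submodule K (HahnSeries Γ K)) : Set Γ :=
  {g | ∃ w ∈ W, w.orderTop = g}

variable {W : Submodule K (HahnSeries Γ K)}

theorem exists_leadingCoeff_eq_one_of_mem_orders {g : Γ} (hg : g ∈ orders W) :
    ∃ w ∈ W, w.orderTop = g ∧ w.leadingCoeff = 1 := by
  obtain ⟨w, hwW, hwg⟩ := hg
  have hc : w.leadingCoeff ≠ 0 := leadingCoeff_ne_zero.mpr (by simp [← orderTop_ne_top, hwg])
  refine ⟨w.leadingCoeff⁻¹ • w, W.smul_mem _ hwW, ?_, ?_⟩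
  · rw [orderTop_smul_of_ne_zero (inv_ne_zero hc), hwg]
  · rw [leadingCoeff_smul, inv_mul_cancel₀ hc]

theorem linearIndependent_of_orderTop_eq {w : orders W → HahnSeries Γ K}
    (hw : ∀ g, (w g).orderTop = g) : LinearIndependent K w :=
  linearIndependent_of_injective_orderTop (fun g ↦ by simp [← orderTop_ne_top, hw])
    (fun g g' h ↦ Subtype.ext (by simpa [hw] using h))

theorem orders_finite [FiniteDimensional K W] : (orders W).Finite := by
  choose w hwW hw _ using fun g : orders W ↦ exists_leadingCoeff_eq_one_of_mem_orders g.2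
  have hind : LinearIndependent K fun g ↦ (⟨w g, hwW g⟩ : W) :=
    .of_comp W.subtype (linearIndependent_of_orderTop_eq hw)
  exact Set.finite_coe_iff.mp hind.finite

/-- Were some `z ∈ W` outside the span, a difference `z - y` (`y` in the span) of maximal order
could still be pushed to a higher order by subtracting a multiple of `w (z - y).orderTop`. -/
theorem span_eq_of_orderTop_eq [FiniteDimensional K W] {w : orders W → HahnSeries Γ K}
    (hwW : ∀ g, w g ∈ W) (hw : ∀ g, (w g).orderTop = g) (hw1 : ∀ g, (w g).leadingCoeff = 1) :
    span K (Set.range w) = W := by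
  set S := span K (Set.range w)
  have hSW : S ≤ W := span_le.mpr (Set.range_subset_iff.mpr hwW)
  refine le_antisymm hSW fun z hzW ↦ ?_
  by_contra hzS
  have hmem : ∀ y ∈ S, ∃ g ∈ orders W, (z - y).orderTop = g := by
    intro y hy
    obtain ⟨g, hg⟩ := WithTop.ne_top_iff_exists.mp <| orderTop_ne_top.mpr <|
      sub_ne_zero.mpr fun h : z = y ↦ hzS (h ▸ hy)
    exact ⟨g, ⟨z - y, W.sub_mem hzW (hSW hy), hg.symm⟩, hg.symm⟩
  have hfin : ((fun y ↦ (z - y).orderTop) '' S).Finite :=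
    (orders_finite.image ((↑) : Γ → WithTop Γ)).subset <| Set.image_subset_iff.mpr fun y hy ↦ by
      obtain ⟨g, hg, h⟩ := hmem y hy
      exact ⟨g, hg, h.symm⟩
  obtain ⟨y, hyS, hymax⟩ := Set.Finite.exists_maximalFor' _ _ hfin ⟨0, S.zero_mem⟩
  obtain ⟨g, hgO, hg⟩ := hmem y hyS
  set c := (z - y).leadingCoeff
  have hc : c ≠ 0 := leadingCoeff_ne_zero.mpr (by simp [← orderTop_ne_top, hg])
  have hlt : (g : WithTop Γ) < (z - (y + c • w ⟨g, hgO⟩)).orderTop := by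
    rw [← sub_sub]
    refine le_orderTop_of_leadingCoeff_eq hg ?_ ?_
    · rw [orderTop_smul_of_ne_zero hc, hw]
    · rw [leadingCoeff_smul, hw1, mul_one]
  have hy' : y + c • w ⟨g, hgO⟩ ∈ S := S.add_mem hyS (S.smul_mem c (subset_span ⟨_, rfl⟩))
  have hle := hymax hy' (by simpa only [hg] using hlt.le)
  simp only [hg] at hle
  exact hlt.not_ge hle

end HahnSeries

/-- Triangular basis with strictly increasing orders (content of Lemma 1 in
the Hahn series model): linearly independent Hahn series `u₁, …, uₙ` over a
field `K` with real exponents admit a basis `v₁, …, vₙ` of their span and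
exponents `e₁ < ⋯ < eₙ` such that each `vᵢ` has order `eᵢ` with leading
coefficient `1`, and the coefficient of `x^{eᵢ}` in `vⱼ` vanishes for `j > i`
(so the coefficient matrix is lower unitriangular). -/
theorem triangular_basis_hahn_series
    {K : Type*} [Field K] {n : ℕ}
    (u : Fin n → HahnSeries ℝ K) (hu : LinearIndependent K u) :
    ∃ (v : Fin n → HahnSeries ℝ K) (e : Fin n → ℝ),
      LinearIndependent K v ∧
      Submodule.span K (Set.range v) = Submodule.span K (Set.range u) ∧
      StrictMono e ∧
      (∀ i, (v i).coeff (e i) = 1) ∧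
      (∀ i, ∀ x < e i, (v i).coeff x = 0) ∧
      (∀ i j, i < j → (v j).coeff (e i) = 0) := by
  set W := span K (Set.range u)
  have : FiniteDimensional K W := FiniteDimensional.span_of_finite K (Set.finite_range u)
  have : Fintype (orders W) := orders_finite.fintype
  choose w hwW hw hw1 using fun g : orders W ↦ exists_leadingCoeff_eq_one_of_mem_orders g.2
  have hind := linearIndependent_of_orderTop_eq hw
  have hspan := span_eq_of_orderTop_eq hwW hw hw1
  have hcard : Fintype.card (orders W) = n := by
    rw [← finrank_span_eq_card hind, hspan, finrank_span_eq_card hu, Fintype.card_fin]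
  set σ := Fintype.orderIsoFinOfCardEq (orders W) hcard
  have hcoeff : ∀ i x, x < (σ i : ℝ) → (w (σ i)).coeff x = 0 := fun i x hx ↦
    coeff_eq_zero_of_lt_orderTop (by rw [hw]; exact WithTop.coe_lt_coe.mpr hx)
  refine ⟨w ∘ σ, fun i ↦ σ i, hind.comp σ σ.injective, ?_, ?_, fun i ↦ ?_, hcoeff,
    fun i j hij ↦ hcoeff j _ (σ.strictMono hij)⟩
  · rw [σ.surjective.range_comp, hspan]
  · exact Subtype.strictMono_coe _ |>.comp σ.strictMono
  · rw [Function.comp_apply, ← leadingCoeff_eq_coeff_of_orderTop_eq (hw _), hw1]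
end
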